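/- For any hypergraph H and any i, n ≥ 0, the relative embedded homology of the skeleton pair satisfies H_i(H^n, H^{n-1}) = 0 if i ≠ n, and H_n(H^n, H^{n-1}) ≅ Inf_n(H). -/

import Mathlib

/-- Oriented `n`-simplices on a vertex set `V`: finsets of cardinality `n+1`. -/
abbrev Simp (V : Type) (n : ℕ) : Type := {σ : Finset V // σ.card = n + 1}

/-- The group of `n`-chains with coefficients in `G` on the full simplex on `V`. -/
abbrev Ch (V : Type) (G : Type) [AddCommGroup G] (n : ℕ) : Type := Simp V n →₀ G

/-- Boundary of a single `(n+1)`-simplex with coefficient `g`. -/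
noncomputable def bdryFun (V : Type) [LinearOrder V] (G : Type) [AddCommGroup G]
    (n : ℕ) (σ : Simp V (n + 1)) (g : G) : Ch V G n :=
  ∑ v ∈ σ.1.attach, Finsupp.single
    ⟨σ.1.erase v.1, by rw [Finset.card_erase_of_mem v.2, σ.2]; omega⟩
    (((-1 : ℤ) ^ ((σ.1.filter fun w => w < v.1).card)) • g)

/-- The simplicial boundary homomorphism `C_{n+1} → C_n`. -/
noncomputable def bdry (V : Type) [LinearOrder V] (G : Type) [AddCommGroup G]
    (n : ℕ) : Ch V G (n + 1) →+ Ch V G n :=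
  Finsupp.liftAddHom fun σ =>
    { toFun := bdryFun V G n σ
      map_zero' := by simp [bdryFun]
      map_add' := fun a b => by
        simp [bdryFun, smul_add, Finsupp.single_add, Finset.sum_add_distrib] }

/-- The subgroup `G(K)_n ⊆ C_n` of chains supported on the `n`-hyperedges of `K`. -/
def chainsOn (V : Type) [LinearOrder V] (G : Type) [AddCommGroup G]
    (K : Set (Finset V)) (n : ℕ) : AddSubgroup (Ch V G n) where
  carrier := {c | ∀ σ ∈ c.support, (σ : Simp V n).1 ∈ K}
  zero_mem' := by simp
  add_mem' := by
    intro a b ha hb σ hσ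
    rcases Finset.mem_union.mp (Finsupp.support_add hσ) with h | h
    exacts [ha σ h, hb σ h]
  neg_mem' := by
    intro a ha σ hσ
    exact ha σ (by simpa using hσ)

section Generic

variable {C : ℕ → Type} [∀ n, AddCommGroup (C n)]

/-- The infimum chain complex of a graded subgroup `D` inside `(C, d)`. -/
def InfC (d : ∀ n, C (n + 1) →+ C n) (D : ∀ n, AddSubgroup (C n)) :
    ∀ n, AddSubgroup (C n)
  | 0 => D 0
  | (n + 1) => D (n + 1) ⊓ (D n).comap (d n)

/-- The supremum chain complex of a graded subgroup `D` inside `(C, d)`. -/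
def SupC (d : ∀ n, C (n + 1) →+ C n) (D : ∀ n, AddSubgroup (C n)) (n : ℕ) :
    AddSubgroup (C n) :=
  D n ⊔ (D (n + 1)).map (d n)

/-- Relative cycles of the pair of graded subgroups `(K, L)`. -/
def relZ (d : ∀ n, C (n + 1) →+ C n) (K L : ∀ n, AddSubgroup (C n)) :
    ∀ n, AddSubgroup (C n)
  | 0 => K 0
  | (n + 1) => K (n + 1) ⊓ (L n).comap (d n)

/-- Relative boundaries of the pair of graded subgroups `(K, L)`. -/
def relB (d : ∀ n, C (n + 1) →+ C n) (K L : ∀ n, AddSubgroup (C n)) (n : ℕ) :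
    AddSubgroup (C n) :=
  ((K (n + 1)).map (d n) ⊔ L n) ⊓ relZ d K L n

/-- Relative homology of the pair `(K, L)`, i.e. the homology of the quotient chain
complex `K/L`.  (Taking `L = ⊥` gives the absolute homology of `K`.) -/
abbrev relH (d : ∀ n, C (n + 1) →+ C n) (K L : ∀ n, AddSubgroup (C n)) (n : ℕ) : Type _ :=
  relZ d K L n ⧸ (relB d K L n).addSubgroupOf (relZ d K L n)

theorem relZ_mono (d : ∀ n, C (n + 1) →+ C n) {K L K' L' : ∀ n, AddSubgroup (C n)}
    (hK : ∀ n, K n ≤ K' n) (hL : ∀ n, L n ≤ L' n) :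
    ∀ n, relZ d K L n ≤ relZ d K' L' n
  | 0 => hK 0
  | (n + 1) => inf_le_inf (hK (n + 1)) (AddSubgroup.comap_mono (hL n))

theorem relB_mono (d : ∀ n, C (n + 1) →+ C n) {K L K' L' : ∀ n, AddSubgroup (C n)}
    (hK : ∀ n, K n ≤ K' n) (hL : ∀ n, L n ≤ L' n) (n : ℕ) :
    relB d K L n ≤ relB d K' L' n :=
  inf_le_inf (sup_le_sup (AddSubgroup.map_mono (hK (n + 1))) (hL n))
    (relZ_mono d hK hL n)

/-- The map on relative homology induced by an inclusion of pairs. -/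
noncomputable def inducedRelMap (d : ∀ n, C (n + 1) →+ C n)
    {K L K' L' : ∀ n, AddSubgroup (C n)}
    (hK : ∀ n, K n ≤ K' n) (hL : ∀ n, L n ≤ L' n) (n : ℕ) :
    relH d K L n →+ relH d K' L' n :=
  QuotientAddGroup.map _ _ (AddSubgroup.inclusion (relZ_mono d hK hL n)) (by
    intro x hx
    simp only [AddSubgroup.mem_comap, AddSubgroup.mem_addSubgroupOf,
      AddSubgroup.coe_inclusion] at hx ⊢
    exact relB_mono d hK hL n hx)

theorem InfC_le_SupC (d : ∀ n, C (n + 1) →+ C n) (D : ∀ n, AddSubgroup (C n)) :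
    ∀ n, InfC d D n ≤ SupC d D n := by
  intro n
  cases n with
  | zero => exact le_sup_left
  | succ n => exact le_trans inf_le_left le_sup_left

theorem InfC_mono (d : ∀ n, C (n + 1) →+ C n) {D D' : ∀ n, AddSubgroup (C n)}
    (h : ∀ n, D n ≤ D' n) : ∀ n, InfC d D n ≤ InfC d D' n
  | 0 => h 0
  | (n + 1) => inf_le_inf (h (n + 1)) (AddSubgroup.comap_mono (h n))

end Generic

theorem chainsOn_mono (V : Type) [LinearOrder V] (G : Type) [AddCommGroup G]
    {K K' : Set (Finset V)} (h : K ⊆ K') (n : ℕ) :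
    chainsOn V G K n ≤ chainsOn V G K' n := by
  intro c hc σ hσ
  exact h (hc σ hσ)

/-- The `k`-th "skeleton by cardinality": hyperedges of `H` with at most `k` vertices
(i.e. of dimension at most `k - 1`).  The `n`-skeleton `H^n` of the paper is
`skel H (n + 1)`. -/
def skel (H : Set (Finset V)) (k : ℕ) : Set (Finset V) := {σ ∈ H | σ.card ≤ k}

/-! In degree `m`, the chains on `skel H k` are all chains on `H` when `m < k` and are zero
otherwise, while `Inf_m` only sees degrees `m` and `m - 1`. Hence below degree `n` the two
infimum complexes of the pair agree, above degree `n` the larger one vanishes, and in degree `n`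
there are no relative boundaries while all of `Inf_n(H)` consists of relative cycles, because
`∂ ∘ ∂ = 0`. -/

section Generic

variable {C : ℕ → Type} [∀ n, AddCommGroup (C n)] (d : ∀ n, C (n + 1) →+ C n)

theorem InfC_congr {D D' : ∀ n, AddSubgroup (C n)} {m : ℕ} (h : ∀ j ≤ m, D j = D' j) :
    InfC d D m = InfC d D' m := by
  cases m with
  | zero => exact h 0 le_rfl
  | succ m => simp only [InfC, h (m + 1) le_rfl, h m (Nat.le_succ m)]

theorem InfC_eq_bot {D : ∀ n, AddSubgroup (C n)} {m : ℕ} (h : D m = ⊥) :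
    InfC d D m = ⊥ := by
  cases m with
  | zero => exact h
  | succ m => simp only [InfC, h, bot_inf_eq]

theorem InfC_succ_le_comap (hd : ∀ n x, d n (d (n + 1) x) = 0) (D : ∀ n, AddSubgroup (C n))
    (m : ℕ) : InfC d D (m + 1) ≤ (InfC d D m).comap (d m) := by
  intro x hx
  cases m with
  | zero => exact hx.2
  | succ m => exact ⟨hx.2, by simp [hd]⟩

variable {K L : ∀ n, AddSubgroup (C n)}

theorem relZ_le (n : ℕ) : relZ d K L n ≤ K n := by
  cases n with
  | zero => exact le_rfl
  | succ n => exact inf_le_left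

theorem relH_subsingleton_of_le {n : ℕ} (h : K n ≤ L n) : Subsingleton (relH d K L n) := by
  rw [relH, (AddSubgroup.addSubgroupOf_eq_top).mpr]
  · exact QuotientAddGroup.subsingleton_quotient_top
  · exact le_inf ((relZ_le d n).trans (h.trans le_sup_right)) le_rfl

theorem relB_eq_bot {n : ℕ} (hK : K (n + 1) = ⊥) (hL : L n = ⊥) : relB d K L n = ⊥ := by
  simp [relB, hK, hL]

noncomputable def relHEquivRelZ {n : ℕ} (hK : K (n + 1) = ⊥) (hL : L n = ⊥) :
    relH d K L n ≃+ relZ d K L n :=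
  (QuotientAddGroup.quotientAddEquivOfEq (by
    rw [relB_eq_bot d hK hL, AddSubgroup.bot_addSubgroupOf])).trans
    QuotientAddGroup.quotientBot

end Generic

section Boundary

variable {V : Type} {G : Type} [AddCommGroup G]

/-- The chain `g · s` in degree `n`; it is `0` unless `s` has exactly `n + 1` elements, which
makes the degenerate terms of a double boundary vanish on their own. -/
noncomputable def chainOf (n : ℕ) (s : Finset V) : G →+ Ch V G n :=
  if h : s.card = n + 1 then Finsupp.singleAddHom ⟨s, h⟩ else 0

theorem chainOf_eq_zero {n : ℕ} {s : Finset V} (h : s.card ≠ n + 1) :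
    (chainOf n s : G →+ Ch V G n) = 0 :=
  dif_neg h

variable [LinearOrder V]

def faceSign (s : Finset V) (v : V) : ℤ := (-1) ^ (s.filter (· < v)).card

theorem faceSign_erase_of_lt {s : Finset V} {a b : V} (ha : a ∈ s) (hab : a < b) :
    faceSign (s.erase a) b = -faceSign s b := by
  have hmem : a ∈ s.filter (· < b) := Finset.mem_filter.mpr ⟨ha, hab⟩
  obtain ⟨k, hk⟩ := Nat.exists_eq_add_of_lt (Finset.card_pos.mpr ⟨a, hmem⟩)
  rw [faceSign, faceSign, Finset.filter_erase, Finset.card_erase_of_mem hmem, hk]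
  simp [pow_succ]

theorem faceSign_erase_of_gt {s : Finset V} {a b : V} (hab : a < b) :
    faceSign (s.erase b) a = faceSign s a := by
  rw [faceSign, faceSign, Finset.filter_erase,
    Finset.erase_eq_of_notMem fun h => (Finset.mem_filter.mp h).2.not_gt hab]

theorem bdry_single {n : ℕ} (σ : Simp V (n + 1)) (g : G) :
    bdry V G n (Finsupp.single σ g) =
      ∑ v ∈ σ.1, chainOf n (σ.1.erase v) (faceSign σ.1 v • g) := by
  rw [bdry, Finsupp.liftAddHom_apply_single]
  change bdryFun V G n σ g = _
  rw [bdryFun, ← Finset.sum_attach σ.1]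
  refine Finset.sum_congr rfl fun v _ => ?_
  rw [chainOf, dif_pos]
  rfl

theorem bdry_chainOf {n : ℕ} (s : Finset V) (g : G) :
    bdry V G n (chainOf (n + 1) s g) =
      ∑ v ∈ s, chainOf n (s.erase v) (faceSign s v • g) := by
  by_cases h : s.card = n + 2
  · rw [chainOf, dif_pos h]
    exact bdry_single ⟨s, h⟩ g
  · rw [chainOf_eq_zero h, AddMonoidHom.zero_apply, map_zero, eq_comm]
    refine Finset.sum_eq_zero fun v hv => ?_
    rw [chainOf_eq_zero (by rw [Finset.card_erase_of_mem hv]; omega), AddMonoidHom.zero_apply]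

theorem bdry_bdry_single {n : ℕ} (σ : Simp V (n + 2)) (g : G) :
    bdry V G n (bdry V G (n + 1) (Finsupp.single σ g)) = 0 := by
  set s := σ.1
  let f : V × V → Ch V G n := fun p =>
    chainOf n ((s.erase p.1).erase p.2) (faceSign (s.erase p.1) p.2 • faceSign s p.1 • g)
  have hdiag : ∀ a, f (a, a) = 0 := fun a => by
    have hcard : s.card - 1 ≤ ((s.erase a).erase a).card := by
      rw [Finset.erase_idem]; exact Finset.pred_card_le_card_erase
    have hσ : s.card = n + 3 := σ.2
    change chainOf n ((s.erase a).erase a) _ = 0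
    rw [chainOf_eq_zero (by omega), AddMonoidHom.zero_apply]
  -- the terms for `(a, b)` and `(b, a)` hit the same face with opposite signs
  have hlt : ∀ {a b}, a ∈ s → a < b → f (a, b) + f (b, a) = 0 := fun {a b} ha hab => by
    simp only [f, Finset.erase_right_comm (a := a), faceSign_erase_of_lt ha hab,
      faceSign_erase_of_gt hab, smul_smul, ← map_add, ← add_smul, neg_mul,
      mul_comm (faceSign s a), neg_add_cancel, zero_smul, map_zero]
  have hswap : ∀ p ∈ s ×ˢ s, f p + f p.swap = 0 := by
    rintro ⟨a, b⟩ hp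
    obtain ⟨ha, hb⟩ := Finset.mem_product.mp hp
    rcases lt_trichotomy a b with hab | rfl | hab
    · exact hlt ha hab
    · rw [Prod.swap_prod_mk, hdiag, add_zero]
    · rw [add_comm]; exact hlt hb hab
  calc bdry V G n (bdry V G (n + 1) (Finsupp.single σ g))
      = ∑ a ∈ s, ∑ b ∈ s, f (a, b) := by
        rw [bdry_single, map_sum]
        refine Finset.sum_congr rfl fun a _ => ?_
        rw [bdry_chainOf]
        exact Finset.sum_erase s (f := fun b => f (a, b)) (hdiag a)
    _ = ∑ p ∈ s ×ˢ s, f p := (Finset.sum_product _ _ _).symm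
    _ = 0 := by
        refine Finset.sum_involution (fun p _ => p.swap) hswap ?_
          (fun p hp => Finset.mem_product.mpr (Finset.mem_product.mp hp).symm)
          (fun p _ => p.swap_swap)
        rintro ⟨a, b⟩ _ hne heq
        obtain rfl : b = a := congrArg Prod.fst heq
        exact hne (hdiag b)

theorem bdry_bdry (n : ℕ) (c : Ch V G (n + 2)) : bdry V G n (bdry V G (n + 1) c) = 0 := by
  have h : (bdry V G n).comp (bdry V G (n + 1)) = 0 :=
    Finsupp.addHom_ext bdry_bdry_single
  exact DFunLike.congr_fun h c

end Boundary

section Skeleton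

variable {V : Type} [LinearOrder V] (G : Type) [AddCommGroup G] (H : Set (Finset V))

theorem chainsOn_skel_of_lt {k m : ℕ} (h : m < k) :
    chainsOn V G (skel H k) m = chainsOn V G H m := by
  refine le_antisymm (chainsOn_mono V G (fun σ hσ => hσ.1) m) fun c hc σ hσ => ?_
  exact ⟨hc σ hσ, σ.2.trans_le h⟩

theorem chainsOn_skel_of_le {k m : ℕ} (h : k ≤ m) : chainsOn V G (skel H k) m = ⊥ := by
  refine (AddSubgroup.eq_bot_iff_forall _).mpr fun c hc => ?_
  refine Finsupp.support_eq_empty.mp (Finset.eq_empty_of_forall_notMem fun σ hσ => ?_)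
  have := (hc σ hσ).2
  rw [σ.2] at this
  omega

theorem InfC_skel_of_lt {k m : ℕ} (h : m < k) :
    InfC (bdry V G) (fun j => chainsOn V G (skel H k) j) m =
      InfC (bdry V G) (fun j => chainsOn V G H j) m :=
  InfC_congr _ fun _ hj => chainsOn_skel_of_lt G H (hj.trans_lt h)

theorem InfC_skel_of_le {k m : ℕ} (h : k ≤ m) :
    InfC (bdry V G) (fun j => chainsOn V G (skel H k) j) m = ⊥ :=
  InfC_eq_bot _ (chainsOn_skel_of_le G H h)

theorem relZ_skel_pair (n : ℕ) :
    relZ (bdry V G) (InfC (bdry V G) fun m => chainsOn V G (skel H (n + 1)) m)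
        (InfC (bdry V G) fun m => chainsOn V G (skel H n) m) n =
      InfC (bdry V G) (fun m => chainsOn V G H m) n := by
  cases n with
  | zero => exact InfC_skel_of_lt G H zero_lt_one
  | succ n =>
    rw [relZ, InfC_skel_of_lt G H (Nat.lt_succ_self _),
      InfC_skel_of_lt G H (Nat.lt_succ_self _)]
    exact inf_eq_left.mpr (InfC_succ_le_comap _ bdry_bdry _ n)

end Skeleton

theorem skeleton_pair_relative_homology_general
    (V : Type) [LinearOrder V] (G : Type) [AddCommGroup G]
    (H : Set (Finset V)) (i n : ℕ) :
    (i ≠ n → Subsingleton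
        (relH (bdry V G) (InfC (bdry V G) fun m => chainsOn V G (skel H (n + 1)) m)
          (InfC (bdry V G) fun m => chainsOn V G (skel H n) m) i)) ∧
    Nonempty
      ((relH (bdry V G) (InfC (bdry V G) fun m => chainsOn V G (skel H (n + 1)) m)
          (InfC (bdry V G) fun m => chainsOn V G (skel H n) m) n) ≃+
        InfC (bdry V G) (fun m => chainsOn V G H m) n) := by
  refine ⟨fun hne => relH_subsingleton_of_le _ ?_, ⟨?_⟩⟩
  · rcases hne.lt_or_gt with hlt | hgt
    · rw [InfC_skel_of_lt G H hlt, InfC_skel_of_lt G H (hlt.trans (Nat.lt_succ_self n))]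
    · rw [InfC_skel_of_le G H hgt]
      exact bot_le
  · exact (relHEquivRelZ _ (InfC_skel_of_le G H le_rfl) (InfC_skel_of_le G H le_rfl)).trans
      (AddEquiv.addSubgroupCongr (relZ_skel_pair G H n))

/-- For any hypergraph `H` and any `i, n ≥ 0`, the relative embedded
homology of the skeleton pair `(H^n, H^{n-1})` vanishes in degrees `i ≠ n`, and in
degree `n` it is isomorphic to `Inf_n(H)`. -/
theorem skeleton_pair_relative_homology
    (V : Type) [LinearOrder V] [Fintype V] (G : Type) [AddCommGroup G]
    (H : Set (Finset V)) (hH : ∀ σ ∈ H, σ.Nonempty) (i n : ℕ) :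
    (i ≠ n → Subsingleton
        (relH (bdry V G) (InfC (bdry V G) fun m => chainsOn V G (skel H (n + 1)) m)
          (InfC (bdry V G) fun m => chainsOn V G (skel H n) m) i)) ∧
    Nonempty
      ((relH (bdry V G) (InfC (bdry V G) fun m => chainsOn V G (skel H (n + 1)) m)
          (InfC (bdry V G) fun m => chainsOn V G (skel H n) m) n) ≃+
        InfC (bdry V G) (fun m => chainsOn V G H m) n) :=
  skeleton_pair_relative_homology_general V G H i n
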